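/- Two fictitious densities of the same random variable on a metric space are proportional: if ζ₁ (with normalizer ξ₁) and ζ₂ (with normalizer ξ₂) are both fictitious densities of A, then there exists a constant c > 0 such that ζ₂(a) = c · ζ₁(a) for all a ∈ 𝒜. -/
import Mathlib


open MeasureTheory Filter Topology

/-- Two fictitious densities of the same random variable are proportional. -/
theorem stmt1 {Ω 𝒜 : Type*} [MeasurableSpace Ω] [MetricSpace 𝒜]
    (P : Measure Ω) [IsProbabilityMeasure P] (A : Ω → 𝒜)
    (ζ₁ ζ₂ : 𝒜 → ℝ) (ξ₁ ξ₂ : ℝ → ℝ)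
    (hξ₁ : ∀ ε > 0, ξ₁ ε > 0) (hξ₂ : ∀ ε > 0, ξ₂ ε > 0)
    (hlim₁ : ∀ a, Tendsto (fun ε => (P {ω | dist (A ω) a < ε}).toReal / ξ₁ ε)
      (𝓝[>] (0:ℝ)) (𝓝 (ζ₁ a)))
    (hlim₂ : ∀ a, Tendsto (fun ε => (P {ω | dist (A ω) a < ε}).toReal / ξ₂ ε)
      (𝓝[>] (0:ℝ)) (𝓝 (ζ₂ a)))
    (a₀ : 𝒜) (hζ₁a₀ : 0 < ζ₁ a₀)
    (hζ₂pos : ∃ a₁, 0 < ζ₂ a₁) :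
    ∃ c > 0, ∀ a, ζ₂ a = c * ζ₁ a := by
  set c : ℝ := ζ₂ a₀ / ζ₁ a₀ with hc
  set f : ℝ → ℝ := fun ε => (P {ω | dist (A ω) a₀ < ε}).toReal with hf
  -- eventually f ε > 0
  have hmem : ∀ᶠ ε in 𝓝[>] (0:ℝ), ε > 0 := self_mem_nhdsWithin
  have hfpos : ∀ᶠ ε in 𝓝[>] (0:ℝ), 0 < f ε := by
    have h1 := (hlim₁ a₀).eventually (eventually_gt_nhds (half_lt_self hζ₁a₀))
    filter_upwards [h1, hmem] with ε h1 hε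
    by_contra h
    push_neg at h
    have : f ε / ξ₁ ε ≤ 0 := div_nonpos_of_nonpos_of_nonneg h (hξ₁ ε hε).le
    linarith [half_pos hζ₁a₀]
  -- the ratio of normalizers converges to c
  have hratio : Tendsto (fun ε => ξ₁ ε / ξ₂ ε) (𝓝[>] (0:ℝ)) (𝓝 c) := by
    have hdiv : Tendsto (fun ε => (f ε / ξ₂ ε) / (f ε / ξ₁ ε)) (𝓝[>] (0:ℝ)) (𝓝 c) :=
      (hlim₂ a₀).div (hlim₁ a₀) hζ₁a₀.ne'
    refine hdiv.congr' ?_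
    filter_upwards [hfpos, hmem] with ε hfε hε
    rw [div_div_div_eq, mul_comm (f ε) (ξ₁ ε), mul_div_mul_right _ _ hfε.ne']
  obtain ⟨a₁, ha₁⟩ := hζ₂pos
  have key : ∀ a, ζ₂ a = ζ₁ a * c := by
    intro a
    have h1 : Tendsto (fun ε => (P {ω | dist (A ω) a < ε}).toReal / ξ₁ ε * (ξ₁ ε / ξ₂ ε))
        (𝓝[>] (0:ℝ)) (𝓝 (ζ₁ a * c)) := (hlim₁ a).mul hratio
    have h2 : Tendsto (fun ε => (P {ω | dist (A ω) a < ε}).toReal / ξ₁ ε * (ξ₁ ε / ξ₂ ε))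
        (𝓝[>] (0:ℝ)) (𝓝 (ζ₂ a)) := by
      refine (hlim₂ a).congr' ?_
      filter_upwards [hmem] with ε hε
      field_simp [(hξ₁ ε hε).ne', (hξ₂ ε hε).ne']
    exact tendsto_nhds_unique h2 h1
  have hcne : c ≠ 0 := by
    intro h
    rw [key a₁, h, mul_zero] at ha₁
    exact lt_irrefl 0 ha₁
  have hcnonneg : 0 ≤ c := by
    refine ge_of_tendsto hratio ?_
    filter_upwards [hmem] with ε hε
    exact (div_pos (hξ₁ ε hε) (hξ₂ ε hε)).le
  exact ⟨c, lt_of_le_of_ne hcnonneg (Ne.symm hcne), fun a => by rw [key a, mul_comm]⟩
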